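/- arXiv:2309.05688 — 2 statements merged into one kernel-verified Lean document; each statement's English description precedes it below -/
import Mathlib

section
/- If C is an acyclic finite chain complex of finite-dimensional real inner product spaces, where each C_q is given the inner product making its preferred basis orthonormal, then log τ(C) = (1/2) Σ_{q=0}^N (-1)^{q+1} q · log det(-Δ_q), where Δ_q = -(∂*∂ + ∂∂*) is the combinatorial Laplacian on C_q. -/
/-!
In each degree choose orthonormal bases of the boundary space `B_q = im (A q) ⊆ C_q` and of `B_qᗮ`,
the columns of matrices `U_q` and `V_q`. Exactness makes `A q` an isomorphism from `B_{q+1}ᗮ`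
onto `B_q`, so `A q = U_q F_q V_{q+1}ᵀ` with `F_q` invertible, and
`−Δ_{q+1} = U_{q+1} F_{q+1} F_{q+1}ᵀ U_{q+1}ᵀ + V_{q+1} F_qᵀ F_q V_{q+1}ᵀ`
gives `log det (−Δ_{q+1}) = 2 log |det F_{q+1}| + 2 log |det F_q|`. On the torsion side
`|det (b_q, b̃_q)| = |det (U_qᵀ b_q)| · |det (V_qᵀ b̃_q)|`, and `A q b̃_{q+1} = b_q` gives
`det F_q · det (V_{q+1}ᵀ b̃_{q+1}) = det (U_qᵀ b_q)`. Both sides then telescope to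
`Σ_{q<N} (-1)^q log |det F_q|`.
-/

open Matrix

/-- `prevSize r q = r (q−1)`, with the convention that it is `0` for `q = 0`. -/
def prevSize (r : ℕ → ℕ) : ℕ → ℕ
  | 0 => 0
  | q + 1 => r q

/-- The negative `−Δ_q = ∂*∂ + ∂∂*` of the combinatorial Laplacian of a chain complex
given in coordinates: `C_q = ℝ^{n q}` with its preferred orthonormal basis, and
`A q : Matrix (Fin (n q)) (Fin (n (q+1))) ℝ` the matrix of `∂ : C_{q+1} → C_q`, so
that the adjoint `∂*` is given by the transpose. -/
def negLap (n : ℕ → ℕ) (A : ∀ q, Matrix (Fin (n q)) (Fin (n (q + 1))) ℝ) :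
    ∀ q, Matrix (Fin (n q)) (Fin (n q)) ℝ
  | 0 => A 0 * (A 0)ᵀ
  | q + 1 => A (q + 1) * (A (q + 1))ᵀ + (A q)ᵀ * A q

open Module

namespace RaySinger

theorem of_append_cast_eq_submatrix_fromCols {ι α : Type*} {k l m : ℕ} (b : Fin k → ι → α)
    (c : Fin l → ι → α) (h : m = k + l) :
    Matrix.of (fun i j => Fin.append b c (Fin.cast h j) i) =
      (fromCols (Matrix.of b)ᵀ (Matrix.of c)ᵀ).submatrix id
        ((finCongr h).trans finSumFinEquiv.symm) := by
  ext i j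
  simp only [of_apply, submatrix_apply, id_eq, Equiv.trans_apply, finCongr_apply]
  refine Fin.addCases (fun a => ?_) (fun a => ?_) (Fin.cast h j) <;> simp

theorem range_mulVecLin_transpose_of {ι ι' : Type*} [Fintype ι'] (b : ι' → ι → ℝ) :
    LinearMap.range (Matrix.of b)ᵀ.mulVecLin = Submodule.span ℝ (Set.range b) :=
  range_mulVecLin _

theorem card_le_of_span_eq_range {ι ι' κ : Type*} [Fintype ι'] [Fintype κ] {M : Matrix ι ι' ℝ}
    {b : κ → ι → ℝ}
    (hb : Submodule.span ℝ (Set.range b) = LinearMap.range M.mulVecLin)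
    (hbi : LinearIndependent ℝ b) : Fintype.card κ ≤ Fintype.card ι' := by
  rw [← finrank_span_eq_card hbi, hb]
  exact (LinearMap.finrank_range_le _).trans_eq (finrank_fintype_fun_eq_card ℝ)

section OrthoSplit

variable {ι κ μ : Type*} [Fintype ι] [DecidableEq ι] [Fintype κ] [DecidableEq κ]
  [Fintype μ] [DecidableEq μ]

/-- The columns of `U` and of `V` are orthonormal bases of `W` and of its orthogonal complement. -/
structure OrthoSplit (W : Submodule ℝ (ι → ℝ)) (κ μ : Type*) [Fintype κ] [DecidableEq κ]
    [Fintype μ] [DecidableEq μ] where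
  U : Matrix ι κ ℝ
  V : Matrix ι μ ℝ
  transpose_mul_self : (fromCols U V)ᵀ * fromCols U V = 1
  mul_transpose_self : fromCols U V * (fromCols U V)ᵀ = 1
  range_U : LinearMap.range U.mulVecLin = W

theorem OrthoSplit.nonempty {W : Submodule ℝ (ι → ℝ)} (hW : finrank ℝ W = Fintype.card κ)
    (hcard : Fintype.card κ + Fintype.card μ = Fintype.card ι) :
    Nonempty (OrthoSplit W κ μ) := by
  set e := WithLp.linearEquiv 2 ℝ (ι → ℝ)
  set WE := W.comap e.toLinearMap
  have hWE : finrank ℝ WE = Fintype.card κ := by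
    rw [show WE = W.map e.symm.toLinearMap from Submodule.comap_equiv_eq_map_symm e W,
      LinearEquiv.finrank_map_eq, hW]
  let c : OrthonormalBasis κ ℝ WE :=
    (stdOrthonormalBasis ℝ WE).reindex (Fintype.equivFinOfCardEq hWE.symm).symm
  have hc : Submodule.span ℝ (Set.range fun a => (c a : EuclideanSpace ℝ ι)) = WE := by
    rw [Set.range_comp' (fun x : WE => (x : EuclideanSpace ℝ ι)) c, ← Submodule.coe_subtype,
      Submodule.span_image, ← OrthonormalBasis.coe_toBasis, c.toBasis.span_eq, Submodule.map_top,
      Submodule.range_subtype]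
  -- extend `c` to an orthonormal basis `b` of the whole space; its matrix in the standard basis
  -- is orthogonal, and its first block of columns is `c`
  obtain ⟨b, hb⟩ := Orthonormal.exists_orthonormalBasis_extension_of_card_eq
    (𝕜 := ℝ) (ι := κ ⊕ μ) (v := Sum.elim (fun a => (c a : EuclideanSpace ℝ ι)) 0)
    (s := Set.range Sum.inl) (by simp [finrank_euclideanSpace, hcard])
    (by
      rw [orthonormal_iff_ite]
      rintro ⟨_, a, rfl⟩ ⟨_, a', rfl⟩
      simp only [Set.domRestrict_apply, Sum.elim_inl, ← Submodule.coe_inner,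
        orthonormal_iff_ite.mp c.orthonormal a a']
      congr 1
      exact propext ⟨fun h => h ▸ rfl, fun h => Sum.inl_injective (congrArg Subtype.val h)⟩)
  let Q := (EuclideanSpace.basisFun ι ℝ).toBasis.toMatrix b
  refine ⟨⟨Q.toCols₁, Q.toCols₂, ?_, ?_, ?_⟩⟩
  · simpa [Q, fromCols_toCols, conjTranspose_eq_transpose_of_trivial] using
      (EuclideanSpace.basisFun ι ℝ).toMatrix_orthonormalBasis_conjTranspose_mul_self b
  · simpa [Q, fromCols_toCols, conjTranspose_eq_transpose_of_trivial] using
      (EuclideanSpace.basisFun ι ℝ).toMatrix_orthonormalBasis_self_mul_conjTranspose b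
  · have hcol : Q.toCols₁.col = e.toLinearMap ∘ fun a => (c a : EuclideanSpace ℝ ι) := by
      ext a i
      simp [Q, Basis.toMatrix_apply, hb (Sum.inl a) ⟨a, rfl⟩, e]
    rw [range_mulVecLin, hcol, Set.range_comp, Submodule.span_image, hc,
      Submodule.map_comap_eq_of_surjective e.surjective]

theorem OrthoSplit.nonempty_of_linearIndependent {W : Submodule ℝ (ι → ℝ)} {b : κ → ι → ℝ}
    (hb : Submodule.span ℝ (Set.range b) = W) (hbi : LinearIndependent ℝ b)
    (hcard : Fintype.card κ + Fintype.card μ = Fintype.card ι) :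
    Nonempty (OrthoSplit W κ μ) :=
  OrthoSplit.nonempty (by rw [← hb, finrank_span_eq_card hbi]) hcard

theorem OrthoSplit.card_eq_card_sum {W : Submodule ℝ (ι → ℝ)} (S : OrthoSplit W κ μ) :
    Fintype.card ι = Fintype.card (κ ⊕ μ) := by
  have h := congrArg trace S.mul_transpose_self
  rw [trace_mul_comm, S.transpose_mul_self, trace_one, trace_one] at h
  exact_mod_cast h.symm

namespace OrthoSplit

variable {W : Submodule ℝ (ι → ℝ)} (S : OrthoSplit W κ μ)

private theorem orthonormal_blocks :
    S.Uᵀ * S.U = 1 ∧ S.Uᵀ * S.V = 0 ∧ S.Vᵀ * S.U = 0 ∧ S.Vᵀ * S.V = 1 := by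
  have h := S.transpose_mul_self
  rwa [transpose_fromCols, fromRows_mul_fromCols, ← fromBlocks_one, fromBlocks_inj] at h

theorem transpose_U_mul_U : S.Uᵀ * S.U = 1 := S.orthonormal_blocks.1

theorem transpose_V_mul_U : S.Vᵀ * S.U = 0 := S.orthonormal_blocks.2.2.1

theorem transpose_V_mul_V : S.Vᵀ * S.V = 1 := S.orthonormal_blocks.2.2.2

theorem U_mul_transpose_add : S.U * S.Uᵀ + S.V * S.Vᵀ = 1 := by
  simpa [transpose_fromCols, fromCols_mul_fromRows] using S.mul_transpose_self

theorem submatrix_mul_transpose_self (e : ι ≃ κ ⊕ μ) :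
    (fromCols S.U S.V).submatrix id e * ((fromCols S.U S.V).submatrix id e)ᵀ = 1 := by
  rw [transpose_submatrix, submatrix_mul_equiv, S.mul_transpose_self, submatrix_id_id]

theorem abs_det_submatrix (e : ι ≃ κ ⊕ μ) : |((fromCols S.U S.V).submatrix id e).det| = 1 := by
  have h := congrArg det (S.submatrix_mul_transpose_self e)
  rw [det_mul, det_transpose, det_one] at h
  rcases mul_self_eq_one_iff.mp h with h | h <;> simp [h]

variable {ν : Type*} [Fintype ν] {C : Matrix ι ν ℝ}

theorem exists_U_mul_eq (hC : LinearMap.range C.mulVecLin ≤ W) :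
    ∃ X : Matrix κ ν ℝ, S.U * X = C := by
  classical
  have hcol : ∀ j, ∃ x, S.U *ᵥ x = C.col j := fun j => by
    have : C.col j ∈ LinearMap.range S.U.mulVecLin := by
      rw [S.range_U, ← mulVec_single_one]
      exact hC ⟨Pi.single j 1, rfl⟩
    exact this
  choose x hx using hcol
  refine ⟨(Matrix.of x)ᵀ, Matrix.ext fun i j => ?_⟩
  simpa [mul_apply, mulVec, dotProduct] using congrFun (hx j) i

theorem U_mul_transpose_U_mul (hC : LinearMap.range C.mulVecLin ≤ W) : S.U * (S.Uᵀ * C) = C := by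
  obtain ⟨X, rfl⟩ := S.exists_U_mul_eq hC
  rw [← Matrix.mul_assoc S.Uᵀ, S.transpose_U_mul_U, Matrix.one_mul]

theorem transpose_V_mul_eq_zero (hC : LinearMap.range C.mulVecLin ≤ W) : S.Vᵀ * C = 0 := by
  obtain ⟨X, rfl⟩ := S.exists_U_mul_eq hC
  rw [← Matrix.mul_assoc, S.transpose_V_mul_U, Matrix.zero_mul]

theorem eq_zero_of_V_mulVec_mem {v : μ → ℝ} (hv : S.V *ᵥ v ∈ W) : v = 0 := by
  obtain ⟨w, hw⟩ : S.V *ᵥ v ∈ LinearMap.range S.U.mulVecLin := by rwa [S.range_U]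
  have := congrArg (S.Vᵀ *ᵥ ·) hw
  simpa [mulVecLin_apply, mulVec_mulVec, S.transpose_V_mul_U, S.transpose_V_mul_V] using this.symm

theorem mul_V_mul_transpose_V {ρ : Type*} {A : Matrix ρ ι ℝ}
    (hA : W ≤ LinearMap.ker A.mulVecLin) : A * S.V * S.Vᵀ = A := by
  have hAU : A * S.U = 0 := ext_of_mulVec_single fun j => by
    rw [← mulVec_mulVec, zero_mulVec]
    exact hA (S.range_U.le (LinearMap.mem_range_self _ _))
  calc A * S.V * S.Vᵀ = A * (S.U * S.Uᵀ + S.V * S.Vᵀ) := by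
        rw [Matrix.mul_add, ← Matrix.mul_assoc, hAU, Matrix.zero_mul, zero_add, Matrix.mul_assoc]
    _ = A := by rw [S.U_mul_transpose_add, Matrix.mul_one]

theorem det_transpose_U_mul_ne_zero {B : Matrix ι κ ℝ} (hB : LinearMap.range B.mulVecLin ≤ W)
    (hBi : LinearIndependent ℝ B.col) : (S.Uᵀ * B).det ≠ 0 := by
  have hinj : Function.Injective (S.Uᵀ * B).mulVec := by
    refine Function.Injective.of_comp (f := S.U.mulVec) ?_
    have hcomp : S.U.mulVec ∘ (S.Uᵀ * B).mulVec = B.mulVec := by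
      ext v : 1
      simp [mulVec_mulVec, S.U_mul_transpose_U_mul hB]
    rwa [hcomp, mulVec_injective_iff]
  exact ((isUnit_iff_isUnit_det _).mp (mulVec_injective_iff_isUnit.mp hinj)).ne_zero

theorem det_conj_add (X : Matrix κ κ ℝ) (Y : Matrix μ μ ℝ) :
    (S.U * X * S.Uᵀ + S.V * Y * S.Vᵀ).det = X.det * Y.det := by
  obtain ⟨e⟩ := (Fintype.truncEquivOfCardEq S.card_eq_card_sum).nonempty
  set P := (fromCols S.U S.V).submatrix id e
  have hP : Pᵀ * P = 1 := mul_eq_one_comm.mp (S.submatrix_mul_transpose_self e)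
  have hconj : S.U * X * S.Uᵀ + S.V * Y * S.Vᵀ = P * (fromBlocks X 0 0 Y).submatrix e e * Pᵀ := by
    rw [transpose_submatrix, submatrix_mul_equiv, submatrix_mul_equiv, submatrix_id_id,
      fromCols_mul_fromBlocks, transpose_fromCols, fromCols_mul_fromRows]
    simp [Matrix.mul_assoc]
  rw [hconj, det_mul, mul_comm, det_mul, ← mul_assoc, ← det_mul, hP, det_one, one_mul,
    det_submatrix_equiv_self, det_fromBlocks_zero₁₂]

theorem abs_det_fromCols_submatrix {B : Matrix ι κ ℝ} (hB : LinearMap.range B.mulVecLin ≤ W)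
    (B' : Matrix ι μ ℝ) (e : ι ≃ κ ⊕ μ) :
    |((fromCols B B').submatrix id e).det| = |(S.Uᵀ * B).det| * |(S.Vᵀ * B').det| := by
  set P := (fromCols S.U S.V).submatrix id e
  have hP : |Pᵀ.det| = 1 := by
    rw [det_transpose]
    exact S.abs_det_submatrix e
  have hprod : Pᵀ * (fromCols B B').submatrix id e =
      (fromBlocks (S.Uᵀ * B) (S.Uᵀ * B') 0 (S.Vᵀ * B')).submatrix e e := by
    rw [transpose_submatrix, ← submatrix_mul _ _ _ _ _ Function.bijective_id, transpose_fromCols,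
      fromRows_mul_fromCols, S.transpose_V_mul_eq_zero hB]
  have h := congrArg (fun M => |det M|) hprod
  simp only [det_mul, abs_mul, hP, one_mul, det_submatrix_equiv_self, det_fromBlocks_zero₂₁] at h
  exact h

end OrthoSplit

section Boundary

variable {ι' κ' ν : Type*} [Fintype ι'] [DecidableEq ι'] [Fintype κ'] [DecidableEq κ']
  {W : Submodule ℝ (ι → ℝ)} {W' : Submodule ℝ (ι' → ℝ)}

def compress (S : OrthoSplit W κ μ) (A : Matrix ι ι' ℝ) (S' : OrthoSplit W' κ' κ) :
    Matrix κ κ ℝ :=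
  S.Uᵀ * A * S'.V

variable (S : OrthoSplit W κ μ) (S' : OrthoSplit W' κ' κ) {A : Matrix ι ι' ℝ}

theorem mul_V_eq_U_mul_compress (hA : LinearMap.range A.mulVecLin ≤ W) :
    A * S'.V = S.U * compress S A S' := by
  rw [compress, ← Matrix.mul_assoc, S.U_mul_transpose_U_mul hA]

theorem U_mul_compress_mul_transpose_V (hA : LinearMap.range A.mulVecLin ≤ W)
    (hker : W' ≤ LinearMap.ker A.mulVecLin) : S.U * compress S A S' * S'.Vᵀ = A := by
  rw [← mul_V_eq_U_mul_compress S S' hA, S'.mul_V_mul_transpose_V hker]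

theorem det_compress_ne_zero (hA : LinearMap.range A.mulVecLin ≤ W)
    (hker : LinearMap.ker A.mulVecLin = W') : (compress S A S').det ≠ 0 := by
  intro h
  obtain ⟨v, hv, hFv⟩ := exists_mulVec_eq_zero_iff.mpr h
  refine hv (S'.eq_zero_of_V_mulVec_mem (hker.le ?_))
  rw [LinearMap.mem_ker, mulVecLin_apply, mulVec_mulVec, mul_V_eq_U_mul_compress S S' hA,
    ← mulVec_mulVec, hFv, mulVec_zero]

theorem compress_mul_transpose_V_mul (hker : W' ≤ LinearMap.ker A.mulVecLin)
    {B : Matrix ι ν ℝ} {B' : Matrix ι' ν ℝ} (hB' : A * B' = B) :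
    compress S A S' * (S'.Vᵀ * B') = S.Uᵀ * B := by
  calc compress S A S' * (S'.Vᵀ * B') = S.Uᵀ * (A * S'.V * S'.Vᵀ) * B' := by
        simp only [compress, Matrix.mul_assoc]
    _ = S.Uᵀ * B := by rw [S'.mul_V_mul_transpose_V hker, Matrix.mul_assoc, hB']

end Boundary

theorem log_det_laplacian {ι₀ κ₀ ι'' κ'' : Type*} [Fintype ι₀] [DecidableEq ι₀] [Fintype κ₀]
    [DecidableEq κ₀] [Fintype ι''] [DecidableEq ι''] [Fintype κ''] [DecidableEq κ'']
    {W₀ : Submodule ℝ (ι₀ → ℝ)} {W : Submodule ℝ (ι → ℝ)} {W'' : Submodule ℝ (ι'' → ℝ)}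
    (S₀ : OrthoSplit W₀ κ₀ μ) (S : OrthoSplit W κ κ₀) (S'' : OrthoSplit W'' κ'' κ)
    {A₀ : Matrix ι₀ ι ℝ} {A : Matrix ι ι'' ℝ}
    (hA₀ : LinearMap.range A₀.mulVecLin ≤ W₀) (hker₀ : LinearMap.ker A₀.mulVecLin = W)
    (hA : LinearMap.range A.mulVecLin ≤ W) (hker : LinearMap.ker A.mulVecLin = W'') :
    Real.log (A * Aᵀ + A₀ᵀ * A₀).det =
      2 * Real.log |(compress S A S'').det| + 2 * Real.log |(compress S₀ A₀ S).det| := by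
  set F := compress S A S''
  set F₀ := compress S₀ A₀ S
  have hout : A * Aᵀ = S.U * (F * Fᵀ) * S.Uᵀ := by
    conv_lhs => rw [← U_mul_compress_mul_transpose_V S S'' hA hker.ge]
    simp only [transpose_mul, transpose_transpose, Matrix.mul_assoc]
    rw [← Matrix.mul_assoc S''.Vᵀ, S''.transpose_V_mul_V, Matrix.one_mul]
  have hin : A₀ᵀ * A₀ = S.V * (F₀ᵀ * F₀) * S.Vᵀ := by
    conv_lhs => rw [← U_mul_compress_mul_transpose_V S₀ S hA₀ hker₀.ge]
    simp only [transpose_mul, transpose_transpose, Matrix.mul_assoc]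
    rw [← Matrix.mul_assoc S₀.Uᵀ, S₀.transpose_U_mul_U, Matrix.one_mul]
  have hdet : (A * Aᵀ + A₀ᵀ * A₀).det = F.det ^ 2 * F₀.det ^ 2 := by
    rw [hout, hin, S.det_conj_add, det_mul, det_mul, det_transpose, det_transpose]
    ring
  rw [hdet, Real.log_mul (pow_ne_zero 2 (det_compress_ne_zero S S'' hA hker))
    (pow_ne_zero 2 (det_compress_ne_zero S₀ S hA₀ hker₀)), Real.log_pow, Real.log_pow,
    ← Real.log_abs F.det, ← Real.log_abs F₀.det]
  push_cast
  ring

end OrthoSplit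

section Torsion

variable {k l m : ℕ} {W : Submodule ℝ (Fin m → ℝ)} {b : Fin k → Fin m → ℝ}

theorem OrthoSplit.log_abs_det_fin_append (S : OrthoSplit W (Fin k) (Fin l))
    (c : Fin l → Fin m → ℝ) (h : k + l = m) (hb : Submodule.span ℝ (Set.range b) ≤ W)
    (hbi : LinearIndependent ℝ b) (hc : (S.Vᵀ * (Matrix.of c)ᵀ).det ≠ 0) :
    Real.log |(Matrix.of fun i j => Fin.append b c (Fin.cast h.symm j) i).det| =
      Real.log |(S.Uᵀ * (Matrix.of b)ᵀ).det| + Real.log |(S.Vᵀ * (Matrix.of c)ᵀ).det| := by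
  have hB := (range_mulVecLin_transpose_of b).trans_le hb
  rw [of_append_cast_eq_submatrix_fromCols, S.abs_det_fromCols_submatrix hB, Real.log_mul
    (abs_ne_zero.mpr (S.det_transpose_U_mul_ne_zero hB hbi)) (abs_ne_zero.mpr hc)]

theorem OrthoSplit.log_abs_det_fin_append_of_eq_zero (S : OrthoSplit W (Fin k) (Fin l))
    (c : Fin l → Fin m → ℝ) (h : k + l = m) (hb : Submodule.span ℝ (Set.range b) ≤ W)
    (hbi : LinearIndependent ℝ b) (hl : l = 0) :
    Real.log |(Matrix.of fun i j => Fin.append b c (Fin.cast h.symm j) i).det| =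
      Real.log |(S.Uᵀ * (Matrix.of b)ᵀ).det| := by
  have hV : (S.Vᵀ * (Matrix.of c)ᵀ).det = 1 := det_eq_one_of_card_eq_zero (by simp [hl])
  rw [S.log_abs_det_fin_append c h hb hbi (by simp [hV]), hV, abs_one, Real.log_one, add_zero]

theorem log_abs_det_fin_append_of_lift {μ : Type*} [Fintype μ] [DecidableEq μ] {k' m' : ℕ}
    {W' : Submodule ℝ (Fin m' → ℝ)} (S : OrthoSplit W (Fin k) μ)
    (S' : OrthoSplit W' (Fin k') (Fin k)) {A : Matrix (Fin m) (Fin m') ℝ}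
    (hA : LinearMap.range A.mulVecLin ≤ W) (hker : LinearMap.ker A.mulVecLin = W')
    (hbi : LinearIndependent ℝ b) {b' : Fin k' → Fin m' → ℝ}
    (hb' : Submodule.span ℝ (Set.range b') ≤ W') (hbi' : LinearIndependent ℝ b')
    (c' : Fin k → Fin m' → ℝ) (hc' : ∀ i, A *ᵥ c' i = b i) (h : k' + k = m') :
    Real.log |(Matrix.of fun i j => Fin.append b' c' (Fin.cast h.symm j) i).det| =
      Real.log |(S'.Uᵀ * (Matrix.of b')ᵀ).det| + Real.log |(S.Uᵀ * (Matrix.of b)ᵀ).det| -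
        Real.log |(compress S A S').det| := by
  have hB : LinearMap.range (Matrix.of b)ᵀ.mulVecLin ≤ W := by
    rw [range_mulVecLin_transpose_of, Submodule.span_le]
    rintro _ ⟨i, rfl⟩
    exact hA ⟨c' i, hc' i⟩
  have hlift : A * (Matrix.of c')ᵀ = (Matrix.of b)ᵀ := Matrix.ext fun i a => congrFun (hc' a) i
  have hdet : (compress S A S').det * (S'.Vᵀ * (Matrix.of c')ᵀ).det =
      (S.Uᵀ * (Matrix.of b)ᵀ).det := by
    rw [← det_mul, compress_mul_transpose_V_mul S S' hker.ge hlift]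
  have hV := right_ne_zero_of_mul (hdet ▸ S.det_transpose_U_mul_ne_zero hB hbi)
  rw [S'.log_abs_det_fin_append c' h hb' hbi' hV, ← hdet, abs_mul,
    Real.log_mul (abs_ne_zero.mpr (det_compress_ne_zero S S' hA hker)) (abs_ne_zero.mpr hV)]
  ring

end Torsion

theorem alternating_sum_telescope (N : ℕ) (t p f ℓ : ℕ → ℝ) (ht₀ : t 0 = p 0)
    (ht : ∀ q, t (q + 1) = p (q + 1) + p q - f q)
    (hℓ : ∀ q, ℓ (q + 1) = 2 * f (q + 1) + 2 * f q) (hp : p N = 0) (hf : f N = 0) :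
    ∑ q ∈ Finset.range (N + 1), (-1 : ℝ) ^ q * t q =
      1 / 2 * ∑ q ∈ Finset.range (N + 1), (-1 : ℝ) ^ (q + 1) * q * ℓ q := by
  have hL : ∀ M, ∑ q ∈ Finset.range (M + 1), (-1 : ℝ) ^ q * t q =
      (-1) ^ M * p M + ∑ q ∈ Finset.range M, (-1) ^ q * f q := by
    intro M
    induction M with
    | zero => simp [ht₀]
    | succ M ih => rw [Finset.sum_range_succ, ih, ht, Finset.sum_range_succ]; ring
  have hR : ∀ M, 1 / 2 * ∑ q ∈ Finset.range (M + 1), (-1 : ℝ) ^ (q + 1) * q * ℓ q =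
      (-1) ^ (M + 1) * M * f M + ∑ q ∈ Finset.range M, (-1) ^ q * f q := by
    intro M
    induction M with
    | zero => simp
    | succ M ih =>
      rw [Finset.sum_range_succ, mul_add, ih, hℓ, Finset.sum_range_succ]
      push_cast
      ring
  rw [hL, hR, hp, hf]
  ring

end RaySinger

open RaySinger

theorem torsion_eq_laplacian_dets_general
    (N : ℕ) (n r : ℕ → ℕ)
    (A : ∀ q, Matrix (Fin (n q)) (Fin (n (q + 1))) ℝ)
    -- acyclicity: vanishing homology in all degrees
    (hexact : ∀ q, LinearMap.ker (Matrix.mulVecLin (A q))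
      = LinearMap.range (Matrix.mulVecLin (A (q + 1))))
    -- `b q` is a basis of `B_q = im(∂ : C_{q+1} → C_q)`, with lifts `b̃`
    (b : ∀ q, Fin (r q) → Fin (n q) → ℝ)
    (btil : ∀ q, Fin (prevSize r q) → Fin (n q) → ℝ)
    (hn : ∀ q, r q + prevSize r q = n q)
    (hbspan : ∀ q, Submodule.span ℝ (Set.range (b q))
      = LinearMap.range (Matrix.mulVecLin (A q)))
    (hbind : ∀ q, LinearIndependent ℝ (b q))
    (hbtil : ∀ q (i : Fin (r q)), (A q).mulVec (btil (q + 1) i) = b q i)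
    -- the complex is concentrated in degrees `0, …, N`
    (hfin : ∀ q, N < q → n q = 0) :
    ∑ q ∈ Finset.range (N + 1), (-1 : ℝ) ^ q *
        Real.log |(Matrix.of fun i j =>
          Fin.append (b q) (btil q) (Fin.cast (hn q).symm j) i).det|
      = (1 / 2) * ∑ q ∈ Finset.range (N + 1), (-1 : ℝ) ^ (q + 1) * q *
          Real.log (negLap n A q).det := by
  let S q : OrthoSplit (LinearMap.range (A q).mulVecLin) (Fin (r q)) (Fin (prevSize r q)) :=
    (OrthoSplit.nonempty_of_linearIndependent (hbspan q) (hbind q) (by simp [hn q])).some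
  have hrN : r N = 0 := by
    simpa [hfin (N + 1) (by omega)] using card_le_of_span_eq_range (hbspan N) (hbind N)
  refine alternating_sum_telescope N _ (fun q => Real.log |((S q).Uᵀ * (Matrix.of (b q))ᵀ).det|)
    (fun q => Real.log |(compress (S q) (A q) (S (q + 1))).det|) _ ?_ (fun q => ?_)
    (fun q => ?_) ?_ ?_
  · exact (S 0).log_abs_det_fin_append_of_eq_zero _ (hn 0) (hbspan 0).le (hbind 0) rfl
  · exact log_abs_det_fin_append_of_lift (S q) (S (q + 1)) le_rfl (hexact q) (hbind q)
      (hbspan (q + 1)).le (hbind (q + 1)) (btil (q + 1)) (hbtil q) (hn (q + 1))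
  · exact log_det_laplacian (S q) (S (q + 1)) (S (q + 2)) le_rfl (hexact q) le_rfl
      (hexact (q + 1))
  · rw [det_eq_one_of_card_eq_zero (by simp [hrN]), abs_one, Real.log_one]
  · rw [det_eq_one_of_card_eq_zero (by simp [hrN]), abs_one, Real.log_one]

/-- Ray–Singer, Proposition 1.7: for an acyclic finite based chain complex
`C_N → ⋯ → C_0` of finite-dimensional real inner product spaces (each `C_q = ℝ^{n q}`
with the inner product making the preferred basis orthonormal),
`log τ(C) = (1/2) Σ_{q} (−1)^{q+1} q log det(−Δ_q)`, where
`log τ(C) = Σ_q (−1)^q log [(b_q, b̃_{q−1})/c_q]` for any choice of bases `b_q` of the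
boundary spaces `B_q` with lifts `b̃_q`. -/
theorem torsion_eq_laplacian_dets
    (N : ℕ) (n r : ℕ → ℕ)
    (A : ∀ q, Matrix (Fin (n q)) (Fin (n (q + 1))) ℝ)
    -- chain complex: `∂ ∘ ∂ = 0`
    (hAA : ∀ q, A q * A (q + 1) = 0)
    -- acyclicity: vanishing homology in all degrees
    (hsurj : LinearMap.range (Matrix.mulVecLin (A 0)) = ⊤)
    (hexact : ∀ q, LinearMap.ker (Matrix.mulVecLin (A q))
      = LinearMap.range (Matrix.mulVecLin (A (q + 1))))
    -- `b q` is a basis of `B_q = im(∂ : C_{q+1} → C_q)`, with lifts `b̃`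
    (b : ∀ q, Fin (r q) → Fin (n q) → ℝ)
    (btil : ∀ q, Fin (prevSize r q) → Fin (n q) → ℝ)
    (hn : ∀ q, r q + prevSize r q = n q)
    (hbspan : ∀ q, Submodule.span ℝ (Set.range (b q))
      = LinearMap.range (Matrix.mulVecLin (A q)))
    (hbind : ∀ q, LinearIndependent ℝ (b q))
    (hbtil : ∀ q (i : Fin (r q)), (A q).mulVec (btil (q + 1) i) = b q i)
    -- the complex is concentrated in degrees `0, …, N`
    (hfin : ∀ q, N < q → n q = 0) :
    ∑ q ∈ Finset.range (N + 1), (-1 : ℝ) ^ q *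
        Real.log |(Matrix.of fun i j =>
          Fin.append (b q) (btil q) (Fin.cast (hn q).symm j) i).det|
      = (1 / 2) * ∑ q ∈ Finset.range (N + 1), (-1 : ℝ) ^ (q + 1) * q *
          Real.log (negLap n A q).det :=
  torsion_eq_laplacian_dets_general N n r A hexact b btil hn hbspan hbind hbtil hfin
end

section
/- The map (z₁,z₂) ↦ (z₂,z₁) on S³ descends to a homeomorphism between the lens spaces L(p,q) and L(p,q'), where qq' ≡ 1 mod p. -/
/-- The unit sphere `S³ = {(z₁,z₂) ∈ ℂ² : |z₁|² + |z₂|² = 1}`. -/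
abbrev Sphere3 : Type := {z : ℂ × ℂ // ‖z.1‖ ^ 2 + ‖z.2‖ ^ 2 = 1}

/-- The orbit relation of the `ℤ_p` action on `S³` generated by
`(z₁, z₂) ↦ (e^{2πi/p} z₁, e^{2πiq/p} z₂)`. -/
def lensRel (p q : ℕ) : Sphere3 → Sphere3 → Prop := fun x y =>
  ∃ k : ℤ, y.val.1 = Complex.exp (2 * Real.pi * Complex.I * k / p) * x.val.1 ∧
    y.val.2 = Complex.exp (2 * Real.pi * Complex.I * q * k / p) * x.val.2

/-- The lens space `L(p,q)`, the quotient of `S³` by the `ℤ_p` action. -/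
abbrev LensSpace (p q : ℕ) : Type := Quot (lensRel p q)

/-- The map `(z₁, z₂) ↦ (z₂, z₁)` on `S³`. -/
def swapCoords : Sphere3 → Sphere3 := fun z =>
  ⟨(z.val.2, z.val.1), by rw [add_comm]; exact z.prop⟩

/-!
If `y = (ζᵏ x₁, ζ^{qk} x₂)` with `ζ = e^{2πi/p}`, then, since `q' q k ≡ k mod p`, the swapped
point `(y₂, y₁) = (ζ^{qk} x₂, ζ^{q'(qk)} x₁)` lies in the orbit of `(x₂, x₁)` under the action
defining `L(p,q')`. Hence the swap, a self-inverse homeomorphism of `S³`, carries the orbit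
relation of `L(p,q)` exactly onto that of `L(p,q')` and induces a homeomorphism of the quotients.
-/

open Complex

theorem exp_two_pi_I_mul_div_eq_of_modEq {p : ℕ} {m n : ℤ} (h : m ≡ n [ZMOD p]) :
    exp (2 * Real.pi * I * m / p) = exp (2 * Real.pi * I * n / p) := by
  rcases eq_or_ne p 0 with rfl | hp
  · simp
  obtain ⟨c, hc⟩ := h.dvd
  have hc' : (n : ℂ) = m + p * c := by exact_mod_cast (sub_eq_iff_eq_add'.mp hc)
  have hpC : (p : ℂ) ≠ 0 := Nat.cast_ne_zero.mpr hp
  rw [hc', exp_eq_exp_iff_exists_int]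
  exact ⟨-c, by field_simp; push_cast; ring⟩

@[simp]
theorem swapCoords_swapCoords (z : Sphere3) : swapCoords (swapCoords z) = z := rfl

theorem lensRel_swapCoords {p q q' : ℕ} (hinv : q * q' ≡ 1 [MOD p]) {x y : Sphere3}
    (h : lensRel p q x y) : lensRel p q' (swapCoords x) (swapCoords y) := by
  obtain ⟨k, h₁, h₂⟩ := h
  have hk : (q' * (q * k) : ℤ) ≡ k [ZMOD p] := by
    have h := (Int.natCast_modEq_iff.mpr hinv).mul_right k
    push_cast at h
    convert h using 1 <;> ring
  refine ⟨q * k, ?_, ?_⟩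
  · simpa [swapCoords, mul_assoc] using h₂
  · simp only [swapCoords]
    rw [h₁]
    congr 1
    simpa [mul_assoc] using (exp_two_pi_I_mul_div_eq_of_modEq hk).symm

theorem lensRel_iff_lensRel_swapCoords {p q q' : ℕ} (hinv : q * q' ≡ 1 [MOD p])
    (x y : Sphere3) : lensRel p q x y ↔ lensRel p q' (swapCoords x) (swapCoords y) :=
  ⟨lensRel_swapCoords hinv, fun h => by
    simpa using lensRel_swapCoords (q' := q) (by rwa [mul_comm]) h⟩

noncomputable def swapCoordsHomeomorph : Sphere3 ≃ₜ Sphere3 :=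
  (Homeomorph.prodComm ℂ ℂ).subtype fun _ => by simp [add_comm]

theorem lens_swap_homeomorph_general (p q q' : ℕ) (hinv : q * q' ≡ 1 [MOD p]) :
    ∃ F : LensSpace p q ≃ₜ LensSpace p q',
      ∀ z : Sphere3, F (Quot.mk _ z) = Quot.mk _ (swapCoords z) :=
  ⟨Homeomorph.Quot.congr swapCoordsHomeomorph (lensRel_iff_lensRel_swapCoords hinv),
    fun _ => rfl⟩

/-- The map `(z₁, z₂) ↦ (z₂, z₁)` on `S³` descends to a homeomorphism between the lens
spaces `L(p,q)` and `L(p,q′)`, where `q q′ ≡ 1 mod p`. -/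
theorem lens_swap_homeomorph (p q q' : ℕ) (h0q : 0 < q) (hqp : q < p)
    (hco : Nat.Coprime p q) (hinv : q * q' ≡ 1 [MOD p]) :
    ∃ F : LensSpace p q ≃ₜ LensSpace p q',
      ∀ z : Sphere3, F (Quot.mk _ z) = Quot.mk _ (swapCoords z) :=
  lens_swap_homeomorph_general p q q' hinv
end
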